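/- Let SF = (A,R) be a SETAF and E ⊆ A. Then for all C ⊆ A it holds that E ∈ adm(SF,C) if and only if for every S ∈ SCCs(SF), (E ∩ S) ∈ adm(SF↓_{UP_SF(S,E)}^{(E∖S)⁺_R}, U_SF(S,E) ∩ C, M_SF(S,E)). -/

import Mathlib

/-- A SETAF: a finite set of arguments `A` together with an attack relation `R`
    whose elements are pairs `(T, h)` with nonempty tail `T ⊆ A` and head `h ∈ A`. -/
structure SETAF (α : Type*) where
  A : Set α
  R : Set (Set α × α)
  finA : A.Finite
  tail_nonempty : ∀ r ∈ R, (r.1 : Set α).Nonempty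
  tail_subset : ∀ r ∈ R, r.1 ⊆ A
  head_mem : ∀ r ∈ R, r.2 ∈ A

namespace SETAF

variable {α : Type*}

/-- `S ↦_R a` : the set `S` attacks the argument `a`. -/
def attacksArg (SF : SETAF α) (S : Set α) (a : α) : Prop :=
  ∃ T, T ⊆ S ∧ (T, a) ∈ SF.R

/-- `S ↦_R S'` : the set `S` attacks the set `S'`. -/
def attacksSet (SF : SETAF α) (S S' : Set α) : Prop :=
  ∃ a ∈ S', SF.attacksArg S a

/-- `S⁺_R`. -/
def plus (SF : SETAF α) (S : Set α) : Set α := {a | SF.attacksArg S a}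

/-- The range `S⊕_R = S ∪ S⁺_R`. -/
def range (SF : SETAF α) (S : Set α) : Set α := S ∪ SF.plus S

/-- Conflict-free sets. -/
def cf (SF : SETAF α) : Set (Set α) :=
  {S | S ⊆ SF.A ∧ ∀ r ∈ SF.R, ¬ (r.1 ∪ {r.2} ⊆ S)}

/-- `S` defends `a` : every attacker-set of `a` is counter-attacked by `S`. -/
def defends (SF : SETAF α) (S : Set α) (a : α) : Prop :=
  ∀ B ⊆ SF.A, SF.attacksArg B a → SF.attacksSet S B

/-- Admissible sets. -/
def adm (SF : SETAF α) : Set (Set α) :=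
  {S | S ∈ SF.cf ∧ ∀ a ∈ S, SF.defends S a}

/-- Complete extensions. -/
def com (SF : SETAF α) : Set (Set α) :=
  {S | S ∈ SF.adm ∧ ∀ a ∈ SF.A, SF.defends S a → a ∈ S}

/-- Stable extensions. -/
def stb (SF : SETAF α) : Set (Set α) :=
  {S | S ∈ SF.cf ∧ ∀ a ∈ SF.A \ S, SF.attacksArg S a}

/-- Preferred extensions. -/
def pref (SF : SETAF α) : Set (Set α) :=
  {S | S ∈ SF.adm ∧ ¬ ∃ T ∈ SF.adm, S ⊂ T}

/-- Semi-stable extensions. -/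
def sem (SF : SETAF α) : Set (Set α) :=
  {S | S ∈ SF.adm ∧ ¬ ∃ T ∈ SF.adm, SF.range S ⊂ SF.range T}

/-- The `E`-reduct `SF^E` of a SETAF. -/
def reduct (SF : SETAF α) (E : Set α) : SETAF α where
  A := SF.A \ SF.range E
  R := {r | ∃ T h, (T, h) ∈ SF.R ∧ T ∩ SF.plus E = ∅ ∧ ¬ T ⊆ E ∧
        h ∈ SF.A \ SF.range E ∧ r = (T \ E, h)}
  finA := SF.finA.subset Set.diff_subset
  tail_nonempty := by
    rintro r ⟨T, h, hR, hTE, hTsub, hh, rfl⟩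
    exact Set.diff_nonempty.mpr hTsub
  tail_subset := by
    rintro r ⟨T, h, hR, hTE, hTsub, hh, rfl⟩
    rintro t ⟨htT, htE⟩
    refine ⟨SF.tail_subset (T, h) hR htT, ?_⟩
    rintro (hE | hplus)
    · exact htE hE
    · exact (Set.ext_iff.mp hTE t).mp ⟨htT, hplus⟩
  head_mem := by
    rintro r ⟨T, h, hR, hTE, hTsub, hh, rfl⟩
    exact hh

/-- The restriction `SF↓_S^D` of a SETAF w.r.t. a set `S` and a set `D` of
    deleted (defeated) arguments. -/
def restrict (SF : SETAF α) (D S : Set α) : SETAF α where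
  A := (SF.A ∩ S) \ D
  R := {r | ∃ T h, (T, h) ∈ SF.R ∧ h ∈ (SF.A ∩ S) \ D ∧ T ∩ D = ∅ ∧
        (T ∩ ((SF.A ∩ S) \ D)).Nonempty ∧ r = (T ∩ ((SF.A ∩ S) \ D), h)}
  finA := SF.finA.subset (fun a ha => ha.1.1)
  tail_nonempty := by
    rintro r ⟨T, h, _, _, _, hne, rfl⟩
    exact hne
  tail_subset := by
    rintro r ⟨T, h, _, _, _, _, rfl⟩
    exact Set.inter_subset_right
  head_mem := by
    rintro r ⟨T, h, _, hh, _, _, rfl⟩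
    exact hh

/-- Edge of the primal graph of a SETAF. -/
def primalEdge (SF : SETAF α) (t h : α) : Prop := ∃ T, (T, h) ∈ SF.R ∧ t ∈ T

/-- `a` influences `b` : there is a directed path from `a` to `b` in the primal graph. -/
def influences (SF : SETAF α) : α → α → Prop := Relation.ReflTransGen SF.primalEdge

/-- The strongly connected component of an argument in the primal graph. -/
def scc (SF : SETAF α) (a : α) : Set α :=
  {b | SF.influences a b ∧ SF.influences b a}

/-- The strongly connected components of (the primal graph of) a SETAF. -/
def SCCs (SF : SETAF α) : Set (Set α) :=
  {S | ∃ a ∈ SF.A, S = SF.scc a}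

/-- Defeated arguments of an SCC `S` w.r.t. `E`. -/
def Dscc (SF : SETAF α) (S E : Set α) : Set α :=
  {a ∈ S | SF.attacksArg (E \ S) a}

/-- Provisionally defeated arguments of an SCC `S` w.r.t. `E`. -/
def Pscc (SF : SETAF α) (S E : Set α) : Set α :=
  {a ∈ S | SF.attacksArg (SF.A \ (S ∪ SF.plus E)) a} \ SF.Dscc S E

/-- Undefeated arguments of an SCC `S` w.r.t. `E`. -/
def Uscc (SF : SETAF α) (S E : Set α) : Set α :=
  S \ (SF.Dscc S E ∪ SF.Pscc S E)

/-- `UP_SF(S,E) = U_SF(S,E) ∪ P_SF(S,E)`. -/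
def UPscc (SF : SETAF α) (S E : Set α) : Set α :=
  SF.Uscc S E ∪ SF.Pscc S E

/-- The mitigated attacks `M_SF(S,E)`. -/
def Mscc (SF : SETAF α) (S E : Set α) : Set (Set α × α) :=
  {r ∈ (SF.restrict (SF.plus (E \ S)) (SF.UPscc S E)).R |
    ∀ T', (T', r.2) ∈ SF.R → r.1 ⊆ T' → ¬ T' \ r.1 ⊆ E}

/-- `a` is acceptable considering `M` w.r.t. `E` (in the given SETAF). -/
def acceptableM (SF : SETAF α) (M : Set (Set α × α)) (E : Set α) (a : α) : Prop :=
  ∀ T, (T, a) ∈ SF.R → ∃ X t, (X, t) ∈ SF.R ∧ (X, t) ∉ M ∧ X ⊆ E ∧ t ∈ T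

/-- `adm(SF, C, M)` : admissible in `C` considering `M`. -/
def admCM (SF : SETAF α) (C : Set α) (M : Set (Set α × α)) : Set (Set α) :=
  {E | E ⊆ C ∧ E ∈ SF.cf ∧ ∀ a ∈ E, SF.acceptableM M E a}

/-- `com(SF, C, M)` : complete in `C` considering `M`. -/
def comCM (SF : SETAF α) (C : Set α) (M : Set (Set α × α)) : Set (Set α) :=
  {E | E ∈ SF.admCM C M ∧ ∀ a ∈ C, SF.acceptableM M E a → a ∈ E}

/-- `pref(SF, C, M)` : preferred in `C` considering `M`. -/
def prefCM (SF : SETAF α) (C : Set α) (M : Set (Set α × α)) : Set (Set α) :=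
  {E | E ∈ SF.admCM C M ∧ ¬ ∃ E' ∈ SF.admCM C M, E ⊂ E'}

/-- The characteristic function `F^M_{SF,C}` of `SF` in `C` considering `M`. -/
def charF (SF : SETAF α) (C : Set α) (M : Set (Set α × α)) (E : Set α) : Set α :=
  {a ∈ C | SF.acceptableM M E a}

/-- The empty SETAF `(∅, ∅)`. -/
def emptySETAF (α : Type*) : SETAF α where
  A := ∅
  R := ∅
  finA := Set.finite_empty
  tail_nonempty := by simp
  tail_subset := by simp
  head_mem := by simp

end SETAF

/-!
Fix an SCC `S` and put `D = (E ∖ S)⁺`. An attack on `E ∩ S` whose tail meets `D` is already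
countered from outside `S`; one whose tail avoids `S` and `E⁺` would make its head provisionally
defeated; every other attack survives in the restriction to `UP(S,E)`. When `E` counters such an
attack by `(X, x)`, the argument `x` lies in `S` (otherwise `X ⊆ E ∖ S` and `x ∈ D`), and its
restriction `(X ∩ A', x)` to the arguments `A'` of the restricted framework is not mitigated
because the part of `X` that is cut away lies in `E`. Conversely, an unmitigated local
counter-attack extends to a counter-attack by `E`, and a conflict inside `E` whose head is minimal
for the influence preorder has no tail member in `D`, so it survives as a conflict in the
restriction to the SCC of its head.
-/

namespace SETAF

variable {α : Type*} {SF : SETAF α} {S E T X : Set α} {a e h x : α}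

lemma plus_mono {S S' : Set α} (hSS' : S ⊆ S') : SF.plus S ⊆ SF.plus S' :=
  fun _ ⟨T, hTS, hTR⟩ => ⟨T, hTS.trans hSS', hTR⟩

lemma mem_cf_iff : E ∈ SF.cf ↔ E ⊆ SF.A ∧ ∀ e ∈ E, e ∉ SF.plus E := by
  refine and_congr_right fun _ => ⟨fun hcf e he ⟨T, hTE, hTR⟩ => ?_, fun hE r hr hrE => ?_⟩
  · exact hcf (T, e) hTR (Set.union_subset hTE (Set.singleton_subset_iff.2 he))
  · exact hE r.2 (hrE (Or.inr rfl)) ⟨r.1, Set.subset_union_left.trans hrE, hr⟩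

lemma acceptableM_empty_iff :
    SF.acceptableM ∅ E a ↔ ∀ T, (T, a) ∈ SF.R → ∃ t ∈ T, t ∈ SF.plus E := by
  refine forall₂_congr fun T _ => ⟨?_, ?_⟩
  · rintro ⟨X, t, hXR, -, hXE, htT⟩
    exact ⟨t, htT, X, hXE, hXR⟩
  · rintro ⟨t, htT, X, hXE, hXR⟩
    exact ⟨X, t, hXR, Set.notMem_empty _, hXE, htT⟩

lemma mem_scc_self (SF : SETAF α) (a : α) : a ∈ SF.scc a :=
  ⟨.refl, .refl⟩

lemma scc_eq_of_mem (hb : x ∈ SF.scc a) : SF.scc x = SF.scc a := by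
  ext c
  exact ⟨fun hc => ⟨hb.1.trans hc.1, hc.2.trans hb.2⟩,
    fun hc => ⟨hb.2.trans hc.1, hc.2.trans hb.1⟩⟩

lemma exists_influences_minimal {s : Set α} (hs : s.Finite) (hne : s.Nonempty) :
    ∃ m ∈ s, ∀ x ∈ s, SF.influences x m → SF.influences m x := by
  let r : α → α → Prop := fun x y => SF.influences x y ∧ ¬ SF.influences y x
  have : IsStrictOrder α r :=
    { irrefl := fun x hx => hx.2 hx.1
      trans := fun _ _ _ hxy hyz => ⟨hxy.1.trans hyz.1, fun h => hyz.2 (h.trans hxy.1)⟩ }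
  obtain ⟨m, hm, hmin⟩ := (Set.wellFoundedOn_iff.1 (hs.wellFoundedOn (r := r))).has_min s hne
  exact ⟨m, hm, fun x hx hxm => by_contra fun hmx => hmin x hx ⟨⟨hxm, hmx⟩, hx, hm⟩⟩

lemma exists_mem_tail_of_notMem_plus_diff (hXR : (X, x) ∈ SF.R) (hXE : X ⊆ E)
    (hx : x ∉ SF.plus (E \ S)) : ∃ s ∈ X, s ∈ S := by
  by_contra! hXS
  exact hx ⟨X, fun s hs => ⟨hXE hs, hXS s hs⟩, hXR⟩

/-- `X` must meet the SCC, so `x` lies on a cycle through it. -/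
lemma mem_scc_of_mem_tail (hh : h ∈ SF.scc a) (hTR : (T, h) ∈ SF.R) (hxT : x ∈ T)
    (hXR : (X, x) ∈ SF.R) (hXE : X ⊆ E) (hx : x ∉ SF.plus (E \ SF.scc a)) : x ∈ SF.scc a := by
  obtain ⟨s, hsX, hs⟩ := exists_mem_tail_of_notMem_plus_diff hXR hXE hx
  exact ⟨hs.1.tail ⟨X, hXR, hsX⟩, Relation.ReflTransGen.head ⟨T, hTR, hxT⟩ hh.2⟩

lemma UPscc_eq (SF : SETAF α) (S E : Set α) : SF.UPscc S E = S \ SF.plus (E \ S) := by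
  ext x
  simp only [UPscc, Uscc, Pscc, Dscc, plus, Set.mem_union, Set.mem_sdiff, Set.mem_ofPred_eq]
  tauto

lemma mem_Uscc_iff : a ∈ SF.Uscc S E ↔
    a ∈ S ∧ a ∉ SF.plus (E \ S) ∧ a ∉ SF.plus (SF.A \ (S ∪ SF.plus E)) := by
  simp only [Uscc, Pscc, Dscc, plus, Set.mem_union, Set.mem_sdiff, Set.mem_ofPred_eq]
  tauto

abbrev sccRestrict (SF : SETAF α) (S E : Set α) : SETAF α :=
  SF.restrict (SF.plus (E \ S)) (SF.UPscc S E)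

lemma mem_sccRestrict_A : x ∈ (SF.A ∩ SF.UPscc S E) \ SF.plus (E \ S) ↔
    x ∈ SF.A ∧ x ∈ S ∧ x ∉ SF.plus (E \ S) := by
  simp only [UPscc_eq, Set.mem_sdiff, Set.mem_inter_iff]
  tauto

lemma inter_subset_Uscc (hcf : E ∈ SF.cf)
    (hdef : ∀ e ∈ E, ∀ T, (T, e) ∈ SF.R → ∃ t ∈ T, t ∈ SF.plus E) : E ∩ S ⊆ SF.Uscc S E := by
  rintro e ⟨he, heS⟩
  refine mem_Uscc_iff.2
    ⟨heS, fun heD => (mem_cf_iff.1 hcf).2 e he (plus_mono Set.sdiff_subset heD), ?_⟩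
  rintro ⟨W, hW, hWR⟩
  obtain ⟨w, hwW, hw⟩ := hdef e he W hWR
  exact (hW hwW).2 (Or.inr hw)

lemma inter_scc_subset_sccRestrict_A (hcf : E ∈ SF.cf) :
    E ∩ SF.scc a ⊆ (SF.sccRestrict (SF.scc a) E).A := fun e ⟨he, heS⟩ =>
  mem_sccRestrict_A.2
    ⟨hcf.1 he, heS, fun heD => (mem_cf_iff.1 hcf).2 e he (plus_mono Set.sdiff_subset heD)⟩

lemma inter_scc_mem_sccRestrict_cf (hcf : E ∈ SF.cf)
    (hdef : ∀ e ∈ E, ∀ T, (T, e) ∈ SF.R → ∃ t ∈ T, t ∈ SF.plus E) :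
    E ∩ SF.scc a ∈ (SF.sccRestrict (SF.scc a) E).cf := by
  refine ⟨inter_scc_subset_sccRestrict_A hcf, ?_⟩
  rintro _ ⟨T, h, hTR, -, hTD, -, rfl⟩ hconf
  have hh : h ∈ E ∩ SF.scc a := hconf (Or.inr rfl)
  obtain ⟨x, hxT, X, hXE, hXR⟩ := hdef h hh.1 T hTR
  have hxD : x ∉ SF.plus (E \ SF.scc a) := fun hx =>
    Set.eq_empty_iff_forall_notMem.1 hTD x ⟨hxT, hx⟩
  have hxS := mem_scc_of_mem_tail hh.2 hTR hxT hXR hXE hxD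
  have hxE : x ∈ E :=
    (hconf (Or.inl ⟨hxT, mem_sccRestrict_A.2 ⟨SF.tail_subset _ hTR hxT, hxS, hxD⟩⟩)).1
  exact (mem_cf_iff.1 hcf).2 x hxE ⟨X, hXE, hXR⟩

lemma acceptableM_sccRestrict (hcf : E ∈ SF.cf)
    (hdef : ∀ e ∈ E, ∀ T, (T, e) ∈ SF.R → ∃ t ∈ T, t ∈ SF.plus E) (he : e ∈ E ∩ SF.scc a) :
    (SF.sccRestrict (SF.scc a) E).acceptableM (SF.Mscc (SF.scc a) E) (E ∩ SF.scc a) e := by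
  rintro _ ⟨T, h, hTR, -, hTD, -, heq⟩
  obtain ⟨rfl, rfl⟩ := Prod.mk.inj heq
  obtain ⟨x, hxT, X, hXE, hXR⟩ := hdef e he.1 T hTR
  have hxD : x ∉ SF.plus (E \ SF.scc a) := fun hx =>
    Set.eq_empty_iff_forall_notMem.1 hTD x ⟨hxT, hx⟩
  have hxA' : x ∈ (SF.sccRestrict (SF.scc a) E).A := mem_sccRestrict_A.2
    ⟨SF.tail_subset _ hTR hxT, mem_scc_of_mem_tail he.2 hTR hxT hXR hXE hxD, hxD⟩
  have hXD : X ∩ SF.plus (E \ SF.scc a) = ∅ := Set.eq_empty_iff_forall_notMem.2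
    fun y ⟨hyX, hyD⟩ => (mem_cf_iff.1 hcf).2 y (hXE hyX) (plus_mono Set.sdiff_subset hyD)
  obtain ⟨s, hsX, hsS⟩ := exists_mem_tail_of_notMem_plus_diff hXR hXE hxD
  refine ⟨_, x, ⟨X, x, hXR, hxA', hXD, ⟨s, hsX, ?_⟩, rfl⟩, fun hM => ?_, fun y hy => ?_, hxT, hxA'⟩
  · exact inter_scc_subset_sccRestrict_A hcf ⟨hXE hsX, hsS⟩
  · exact hM.2 X hXR Set.inter_subset_left fun y hy => hXE hy.1
  · exact ⟨hXE hy.1, (mem_sccRestrict_A.1 hy.2).2.1⟩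

lemma inter_scc_mem_sccRestrict_admCM {C : Set α} (hadm : E ∈ SF.admCM C ∅) :
    E ∩ SF.scc a ∈
      (SF.sccRestrict (SF.scc a) E).admCM (SF.Uscc (SF.scc a) E ∩ C) (SF.Mscc (SF.scc a) E) := by
  obtain ⟨hEC, hcf, hacc⟩ := hadm
  have hdef e he := acceptableM_empty_iff.1 (hacc e he)
  exact ⟨fun e he => ⟨inter_subset_Uscc hcf hdef he, hEC he.1⟩,
    inter_scc_mem_sccRestrict_cf hcf hdef, fun e he => acceptableM_sccRestrict hcf hdef he⟩

lemma mem_cf_of_forall_sccRestrict (hE : E ⊆ SF.A)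
    (hcf : ∀ e ∈ E, E ∩ SF.scc e ∈ (SF.sccRestrict (SF.scc e) E).cf) : E ∈ SF.cf := by
  have hE' : ∀ e ∈ E, e ∉ SF.plus (E \ SF.scc e) := fun e he =>
    (mem_sccRestrict_A.1 ((hcf e he).1 ⟨he, mem_scc_self SF e⟩)).2.2
  refine mem_cf_iff.2 ⟨hE, ?_⟩
  by_contra! hconf
  obtain ⟨m, ⟨hmE, T, hTE, hTR⟩, hmin⟩ := exists_influences_minimal
    ((SF.finA.subset hE).subset (Set.sep_subset E (· ∈ SF.plus E))) hconf
  have hTD : T ∩ SF.plus (E \ SF.scc m) = ∅ := by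
    refine Set.eq_empty_iff_forall_notMem.2 fun t ⟨htT, htD⟩ => ?_
    have htm : SF.influences t m := .single ⟨T, hTR, htT⟩
    have htS : t ∈ SF.scc m :=
      ⟨hmin t ⟨hTE htT, plus_mono Set.sdiff_subset htD⟩ htm, htm⟩
    exact hE' t (hTE htT) (scc_eq_of_mem htS ▸ htD)
  obtain ⟨s, hsT, hsS⟩ := exists_mem_tail_of_notMem_plus_diff hTR hTE (hE' m hmE)
  refine (hcf m hmE).2 _ ⟨T, m, hTR, (hcf m hmE).1 ⟨hmE, mem_scc_self SF m⟩, hTD,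
    ⟨s, hsT, (hcf m hmE).1 ⟨hTE hsT, hsS⟩⟩, rfl⟩ (Set.union_subset ?_ ?_)
  · exact fun t ht => ⟨hTE ht.1, (mem_sccRestrict_A.1 ht.2).2.1⟩
  · exact Set.singleton_subset_iff.2 ⟨hmE, mem_scc_self SF m⟩

lemma acceptableM_empty_of_sccRestrict {C : Set α} (he : e ∈ E)
    (hadm : E ∩ SF.scc e ∈
      (SF.sccRestrict (SF.scc e) E).admCM (SF.Uscc (SF.scc e) E ∩ C) (SF.Mscc (SF.scc e) E)) :
    SF.acceptableM ∅ E e := by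
  obtain ⟨hU, ⟨hA', -⟩, hacc⟩ := hadm
  have heS : e ∈ E ∩ SF.scc e := ⟨he, mem_scc_self SF e⟩
  obtain ⟨-, -, heP⟩ := mem_Uscc_iff.1 (hU heS).1
  refine acceptableM_empty_iff.2 fun T hTR => ?_
  by_contra! hT
  have hTD : T ∩ SF.plus (E \ SF.scc e) = ∅ := Set.eq_empty_iff_forall_notMem.2
    fun t ⟨htT, htD⟩ => hT t htT (plus_mono Set.sdiff_subset htD)
  have hTA' : (T ∩ (SF.sccRestrict (SF.scc e) E).A).Nonempty := by
    by_contra! hTA'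
    refine heP ⟨T, fun t htT => ⟨SF.tail_subset _ hTR htT, ?_⟩, hTR⟩
    rintro (htS | htE)
    · exact Set.eq_empty_iff_forall_notMem.1 hTA' t ⟨htT, mem_sccRestrict_A.2
        ⟨SF.tail_subset _ hTR htT, htS, fun htD => hT t htT (plus_mono Set.sdiff_subset htD)⟩⟩
    · exact hT t htT htE
  obtain ⟨X, x, hXR, hXM, hXE, hxT⟩ := hacc e heS _ ⟨T, e, hTR, hA' heS, hTD, hTA', rfl⟩
  obtain ⟨T', hT'R, -, hT'E⟩ : ∃ T', (T', x) ∈ SF.R ∧ X ⊆ T' ∧ T' \ X ⊆ E := by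
    by_contra! hcon
    exact hXM ⟨hXR, hcon⟩
  exact hT x hxT.1
    ⟨T', Set.sdiff_subset_iff.1 hT'E |>.trans (Set.union_subset (hXE.trans Set.inter_subset_left)
      le_rfl), hT'R⟩

lemma mem_admCM_of_forall_sccRestrict {C : Set α} (hE : E ⊆ SF.A)
    (h : ∀ S ∈ SF.SCCs, E ∩ S ∈ (SF.sccRestrict S E).admCM (SF.Uscc S E ∩ C) (SF.Mscc S E)) :
    E ∈ SF.admCM C ∅ := by
  have h' e (he : e ∈ E) := h (SF.scc e) ⟨e, hE he, rfl⟩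
  exact ⟨fun e he => ((h' e he).1 ⟨he, mem_scc_self SF e⟩).2,
    mem_cf_of_forall_sccRestrict hE fun e he => (h' e he).2.1,
    fun e he => acceptableM_empty_of_sccRestrict he (h' e he)⟩

end SETAF

open SETAF

/-- Proposition 3: for all `C ⊆ A`, `E ∈ adm(SF,C)` iff for every SCC `S`,
    `E ∩ S ∈ adm(SF↓_{UP_SF(S,E)}^{(E∖S)⁺}, U_SF(S,E) ∩ C, M_SF(S,E))`. -/
theorem stmt18 {α : Type*} (SF : SETAF α) (E : Set α) (hE : E ⊆ SF.A) :
    ∀ C ⊆ SF.A,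
      (E ∈ SF.admCM C ∅ ↔
        ∀ S ∈ SF.SCCs,
          E ∩ S ∈ (SF.restrict (SF.plus (E \ S)) (SF.UPscc S E)).admCM
            (SF.Uscc S E ∩ C) (SF.Mscc S E)) := by
  intro C _
  refine ⟨fun hadm => ?_, mem_admCM_of_forall_sccRestrict hE⟩
  rintro S ⟨a, -, rfl⟩
  exact inter_scc_mem_sccRestrict_admCM hadm
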